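/- Let t ≥ 3 be a natural number, let G be a finite simple graph, let S be a set of vertices of G, and let u, v ∈ S be two distinct vertices adjacent in G. Suppose G ⊕ S is diamond-free and K_{1,t}-free. Then the set (N(u) ∩ N(v)) \ S is an independent set of G and has at most t - 1 vertices. -/

import Mathlib

/-- Subgraph complementation: `scompl G S` complements the subgraph of `G` induced by `S`. -/
def scompl {V : Type*} (G : SimpleGraph V) (S : Set V) : SimpleGraph V where
  Adj x y := x ≠ y ∧ ((x ∈ S ∧ y ∈ S ∧ ¬ G.Adj x y) ∨ (¬(x ∈ S ∧ y ∈ S) ∧ G.Adj x y))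
  symm := ⟨by
    rintro x y ⟨hxy, h⟩
    refine ⟨hxy.symm, ?_⟩
    rcases h with ⟨hx, hy, h⟩ | ⟨h, hadj⟩
    · exact Or.inl ⟨hy, hx, fun h' => h (G.adj_symm h')⟩
    · exact Or.inr ⟨fun hc => h ⟨hc.2, hc.1⟩, G.adj_symm hadj⟩⟩
  loopless := ⟨fun x h => h.1 rfl⟩

/-- Degree of a vertex in a finite simple graph. -/
noncomputable def deg {V : Type*} [Fintype V] (G : SimpleGraph V) (v : V) : ℕ :=
  (G.neighborSet v).ncard

/-- `a, b, c, d` form an induced diamond with `a`, `b` its degree-2 vertices. -/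
def IsDiamond {V : Type*} (G : SimpleGraph V) (a b c d : V) : Prop :=
  a ≠ b ∧ a ≠ c ∧ a ≠ d ∧ b ≠ c ∧ b ≠ d ∧ c ≠ d ∧
  G.Adj a c ∧ G.Adj a d ∧ G.Adj b c ∧ G.Adj b d ∧ G.Adj c d ∧ ¬ G.Adj a b

def DiamondFree {V : Type*} (G : SimpleGraph V) : Prop :=
  ∀ a b c d : V, ¬ IsDiamond G a b c d

/-- `r` together with the `t` distinct leaves `f 0, …, f (t-1)` forms an induced `K_{1,t}`
with center `r`. -/
def IsStar {V : Type*} (G : SimpleGraph V) (t : ℕ) (r : V) (f : Fin t → V) : Prop :=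
  Function.Injective f ∧ (∀ i, G.Adj r (f i)) ∧ ∀ i j, i ≠ j → ¬ G.Adj (f i) (f j)

def StarFree {V : Type*} (G : SimpleGraph V) (t : ℕ) : Prop :=
  ∀ (r : V) (f : Fin t → V), ¬ IsStar G t r f

/-
The vertices of `A` lie outside `S`, so `G ⊕ S` agrees with `G` on every edge meeting `A`,
while the edge `uv` inside `S` is removed. Hence in `G ⊕ S` the vertices `u, v` are nonadjacent
common neighbours of all of `A`: an edge inside `A` would close an induced diamond, and once `A`
is independent, `t` of its vertices would be the leaves of an induced star centred at `u`.
-/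

lemma Set.nonempty_fin_embedding_of_le_ncard {α : Type*} {s : Set α} {n : ℕ}
    (h : n ≤ s.ncard) : Nonempty (Fin n ↪ s) := by
  rcases s.finite_or_infinite with hs | hs
  · have := hs.fintype
    exact Function.Embedding.nonempty_of_card_le (by simpa [Set.fintypeCard_eq_ncard] using h)
  · exact ⟨Fin.valEmbedding.trans (hs.natEmbedding s)⟩

section scompl

variable {V : Type*} {G : SimpleGraph V} {S : Set V} {x y : V}

lemma scompl_adj_iff_of_notMem_left (hx : x ∉ S) : (scompl G S).Adj x y ↔ G.Adj x y :=
  ⟨fun ⟨_, h⟩ => h.elim (fun h => absurd h.1 hx) And.right,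
    fun h => ⟨G.ne_of_adj h, Or.inr ⟨fun hxy => hx hxy.1, h⟩⟩⟩

lemma scompl_adj_iff_of_notMem_right (hy : y ∉ S) : (scompl G S).Adj x y ↔ G.Adj x y := by
  rw [SimpleGraph.adj_comm, scompl_adj_iff_of_notMem_left hy, SimpleGraph.adj_comm]

lemma not_scompl_adj_of_mem (hx : x ∈ S) (hy : y ∈ S) (h : G.Adj x y) : ¬(scompl G S).Adj x y :=
  fun ⟨_, h'⟩ => h'.elim (fun h' => h'.2.2 h) (fun h' => h'.1 ⟨hx, hy⟩)

lemma isIndepSet_scompl_iff_of_disjoint {A : Set V} (hA : Disjoint A S) :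
    (scompl G S).IsIndepSet A ↔ G.IsIndepSet A := by
  refine forall₂_congr fun x hx => forall₂_congr fun _ _ => ?_
  simp only [scompl_adj_iff_of_notMem_left (Set.disjoint_left.mp hA hx)]

end scompl

section

variable {V : Type*} {H : SimpleGraph V}

lemma DiamondFree.isIndepSet_commonNeighbors (hdf : DiamondFree H) {u v : V} (huv : u ≠ v)
    (hnadj : ¬H.Adj u v) : H.IsIndepSet (H.commonNeighbors u v) := by
  rintro x ⟨hux, hvx⟩ y ⟨huy, hvy⟩ - hxy
  exact hdf u v x y ⟨huv, H.ne_of_adj hux, H.ne_of_adj huy, H.ne_of_adj hvx, H.ne_of_adj hvy,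
    H.ne_of_adj hxy, hux, huy, hvx, hvy, hxy, hnadj⟩

lemma StarFree.ncard_lt_of_isIndepSet {t : ℕ} (hsf : StarFree H t) {r : V} {s : Set V}
    (hs : H.IsIndepSet s) (hr : s ⊆ H.neighborSet r) : s.ncard < t := by
  by_contra! hts
  obtain ⟨f⟩ := Set.nonempty_fin_embedding_of_le_ncard hts
  exact hsf r (fun i => f i) ⟨Subtype.val_injective.comp f.injective, fun i => hr (f i).2,
    fun i j hij => hs (f i).2 (f j).2 (Subtype.val_injective.ne (f.injective.ne hij))⟩

end

theorem stmt13_general {V : Type*} (t : ℕ) (G : SimpleGraph V)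
    (S : Set V) (u v : V) (hu : u ∈ S) (hv : v ∈ S) (huv : G.Adj u v)
    (hdf : DiamondFree (scompl G S)) (hsf : StarFree (scompl G S) t)
    (A : Set V) (hA : A = {x : V | G.Adj u x ∧ G.Adj v x ∧ x ∉ S}) :
    (∀ x ∈ A, ∀ y ∈ A, ¬ G.Adj x y) ∧ A.ncard ≤ t - 1 := by
  have hAS : Disjoint A S := Set.disjoint_left.mpr fun x hx => (hA ▸ hx).2.2
  have hA_common : A ⊆ (scompl G S).commonNeighbors u v := by
    intro x hx
    obtain ⟨hux, hvx, hxS⟩ := hA ▸ hx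
    exact ⟨(scompl_adj_iff_of_notMem_right hxS).mpr hux,
      (scompl_adj_iff_of_notMem_right hxS).mpr hvx⟩
  have hA_indep : (scompl G S).IsIndepSet A :=
    (hdf.isIndepSet_commonNeighbors (G.ne_of_adj huv)
      (not_scompl_adj_of_mem hu hv huv)).mono hA_common
  refine ⟨fun x hx y hy hxy => ?_, ?_⟩
  · exact (isIndepSet_scompl_iff_of_disjoint hAS).mp hA_indep hx hy (G.ne_of_adj hxy) hxy
  · have := hsf.ncard_lt_of_isIndepSet hA_indep fun x hx => (hA_common hx).1
    omega

theorem stmt13 {V : Type*} [Fintype V] (t : ℕ) (ht : 3 ≤ t) (G : SimpleGraph V)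
    (S : Set V) (u v : V) (hu : u ∈ S) (hv : v ∈ S) (huv : G.Adj u v)
    (hdf : DiamondFree (scompl G S)) (hsf : StarFree (scompl G S) t)
    (A : Set V) (hA : A = {x : V | G.Adj u x ∧ G.Adj v x ∧ x ∉ S}) :
    (∀ x ∈ A, ∀ y ∈ A, ¬ G.Adj x y) ∧ A.ncard ≤ t - 1 :=
  stmt13_general t G S u v hu hv huv hdf hsf A hA
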